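/- arXiv:1409.6795 — 2 statements merged into one kernel-verified Lean document; each statement's English description precedes it below -/
import Mathlib

section
/- For a prime power q, the number of sets of the form {x ∈ GF(q³) : N(x−a) = f}, where a ranges over GF(q³), f ranges over GF(q)\{0}, and N(x) = x^(q²+q+1) is the norm from GF(q³) to GF(q), is exactly q³(q−1); i.e., distinct pairs (a,f) give distinct sets. -/
open Polynomial

/-- The number of type I covers {x ∈ GF(q³) : N(x−a) = f}, with
`a ∈ GF(q³)`, `f ∈ GF(q)*` (modelled as the fixed field of the q-power map inside
the field `F` of order `q³`), and `N(x) = x^(q²+q+1)`, is exactly `q³(q−1)`;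
in particular distinct pairs `(a,f)` give distinct sets. -/
theorem stmt0 (q : ℕ) (hq : IsPrimePow q) (F : Type) [Field F] [Fintype F]
    (hF : Fintype.card F = q ^ 3) :
    (Set.ncard {S : Set F | ∃ a f : F, f ≠ 0 ∧ f ^ q = f ∧
        S = {x : F | (x - a) ^ (q ^ 2 + q + 1) = f}} = q ^ 3 * (q - 1)) ∧
    (∀ a f a' f' : F, f ≠ 0 → f ^ q = f → f' ≠ 0 → f' ^ q = f' →
        {x : F | (x - a) ^ (q ^ 2 + q + 1) = f} =
          {x : F | (x - a') ^ (q ^ 2 + q + 1) = f'} → a = a' ∧ f = f') := by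
  classical
  have hq2 : 2 ≤ q := hq.two_le
  have h8 : 2 ^ 3 ≤ q ^ 3 := Nat.pow_le_pow_left hq2 3
  haveI : NeZero (q ^ 3 - 1) := ⟨by omega⟩
  have hmpos : 0 < q ^ 2 + q + 1 := by positivity
  have hm2 : 1 < q ^ 2 + q + 1 := by nlinarith
  -- generator of the unit group
  obtain ⟨g, hg⟩ := IsCyclic.exists_generator (α := Fˣ)
  have hord : orderOf g = q ^ 3 - 1 := by
    rw [orderOf_eq_card_of_forall_mem_zpowers hg, Nat.card_eq_fintype_card,
      Fintype.card_units, hF]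
  have hgen : IsPrimitiveRoot ((g : Fˣ) : F) (q ^ 3 - 1) := by
    rw [← hord]
    exact IsPrimitiveRoot.coe_units_iff.mpr (IsPrimitiveRoot.orderOf g)
  have hfact : q ^ 3 - 1 = (q - 1) * (q ^ 2 + q + 1) := by
    obtain ⟨r, rfl⟩ : ∃ r, q = r + 1 := ⟨q - 1, by omega⟩
    simp only [Nat.add_sub_cancel]
    ring_nf
    omega
  have hfact' : q ^ 3 - 1 = (q ^ 2 + q + 1) * (q - 1) := by rw [hfact, Nat.mul_comm]
  have hζ : IsPrimitiveRoot ((g : F) ^ (q - 1)) (q ^ 2 + q + 1) :=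
    hgen.pow (by omega) hfact
  have hζ' : IsPrimitiveRoot ((g : F) ^ (q ^ 2 + q + 1)) (q - 1) :=
    hgen.pow (by omega) hfact'
  -- characteristic facts
  have hq0 : ((q : ℕ) : F) = 0 := by
    have h := FiniteField.cast_card_eq_zero F
    rw [hF] at h
    push_cast at h
    exact pow_eq_zero_iff (n := 3) (by omega) |>.mp h
  have hm1 : ((q ^ 2 + q + 1 : ℕ) : F) = 1 := by push_cast [hq0]; ring
  -- every admissible f has an m-th root
  have hroot : ∀ f : F, f ≠ 0 → f ^ q = f → ∃ α : F, α ^ (q ^ 2 + q + 1) = f := by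
    intro f hf0 hf
    have hf1 : f ^ (q ^ 3 - 1) = 1 := by
      have := FiniteField.pow_card_sub_one_eq_one f hf0
      rwa [hF] at this
    obtain ⟨k, -, hfk⟩ := hgen.eq_pow_of_pow_eq_one hf1
    have hfq1 : f ^ (q - 1) = 1 := by
      have h1 : f ^ (q - 1) * f = 1 * f := by
        rw [← pow_succ, show q - 1 + 1 = q from by omega, hf, one_mul]
      exact mul_right_cancel₀ hf0 h1
    have hdvd : (q ^ 3 - 1) ∣ k * (q - 1) := by
      rw [← hgen.pow_eq_one_iff_dvd]
      rw [pow_mul, hfk, hfq1]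
    have hmk : (q ^ 2 + q + 1) ∣ k := by
      rw [hfact'] at hdvd
      exact (Nat.mul_dvd_mul_iff_right (by omega : 0 < q - 1)).mp
        (Nat.dvd_trans hdvd dvd_rfl)
    refine ⟨(g : F) ^ (k / (q ^ 2 + q + 1)), ?_⟩
    rw [← pow_mul, Nat.div_mul_cancel hmk, hfk]
  -- each cover is a finite set summing to a
  have hsum : ∀ a f : F, f ≠ 0 → f ^ q = f → ∃ A : Finset F,
      (↑A = {x : F | (x - a) ^ (q ^ 2 + q + 1) = f} ∧ ∑ x ∈ A, x = a) := by
    intro a f hf0 hf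
    obtain ⟨α, hα⟩ := hroot f hf0 hf
    have hnd : ((nthRoots (q ^ 2 + q + 1) f).map (· + a)).Nodup :=
      (hζ.nthRoots_nodup hf0).map (fun x y h => by simpa using h)
    refine ⟨⟨_, hnd⟩, ?_, ?_⟩
    · ext x
      simp only [Finset.mem_coe, Finset.mem_mk, Multiset.mem_map,
        mem_nthRoots hmpos, Set.mem_setOf_eq]
      constructor
      · rintro ⟨y, hy, rfl⟩; simpa using hy
      · intro h; exact ⟨x - a, h, by ring⟩
    · have hsum0 : ∑ i ∈ Finset.range (q ^ 2 + q + 1), ((g : F) ^ (q - 1)) ^ i = 0 := by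
        rw [geom_sum_eq (hζ.ne_one hm2), hζ.pow_eq_one, sub_self, zero_div]
      calc ∑ x ∈ (⟨_, hnd⟩ : Finset F), x
          = ((nthRoots (q ^ 2 + q + 1) f).map (· + a)).sum := by
            simp [Finset.sum]
        _ = ((Multiset.range (q ^ 2 + q + 1)).map
              (fun i => ((g : F) ^ (q - 1)) ^ i * α + a)).sum := by
            rw [hζ.nthRoots_eq hα, Multiset.map_map]
            rfl
        _ = ∑ i ∈ Finset.range (q ^ 2 + q + 1), (((g : F) ^ (q - 1)) ^ i * α + a) := by
            rw [Finset.sum_eq_multiset_sum, Finset.range_val]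
        _ = (∑ i ∈ Finset.range (q ^ 2 + q + 1), ((g : F) ^ (q - 1)) ^ i) * α
              + (q ^ 2 + q + 1) • a := by
            rw [Finset.sum_add_distrib, Finset.sum_mul, Finset.sum_const,
              Finset.card_range]
        _ = a := by
            rw [hsum0, zero_mul, zero_add, nsmul_eq_mul, hm1, one_mul]
  -- injectivity
  have part2 : ∀ a f a' f' : F, f ≠ 0 → f ^ q = f → f' ≠ 0 → f' ^ q = f' →
      {x : F | (x - a) ^ (q ^ 2 + q + 1) = f} =
        {x : F | (x - a') ^ (q ^ 2 + q + 1) = f'} → a = a' ∧ f = f' := by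
    intro a f a' f' hf0 hf hf0' hf' hSS
    obtain ⟨A, hA, hAsum⟩ := hsum a f hf0 hf
    obtain ⟨A', hA', hAsum'⟩ := hsum a' f' hf0' hf'
    have hAA : A = A' := Finset.coe_injective (by rw [hA, hA', hSS])
    have haa : a = a' := by rw [← hAsum, ← hAsum', hAA]
    subst haa
    refine ⟨rfl, ?_⟩
    obtain ⟨α, hα⟩ := hroot f hf0 hf
    have hx : (α + a) ∈ {x : F | (x - a) ^ (q ^ 2 + q + 1) = f} := by
      simp [Set.mem_setOf_eq, hα]
    rw [hSS] at hx
    simp only [Set.mem_setOf_eq, add_sub_cancel_right] at hx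
    rw [← hα, hx]
  refine ⟨?_, part2⟩
  -- counting
  set T : Set F := {f : F | f ≠ 0 ∧ f ^ q = f} with hT
  have hTcard : T.ncard = q - 1 := by
    have hnd' : (nthRoots (q - 1) (1 : F)).Nodup := hζ'.nthRoots_nodup one_ne_zero
    have hTeq : T = ↑(⟨nthRoots (q - 1) (1 : F), hnd'⟩ : Finset F) := by
      ext f
      simp only [hT, Set.mem_setOf_eq, Finset.mem_coe, Finset.mem_mk,
        mem_nthRoots (show 0 < q - 1 by omega)]
      constructor
      · rintro ⟨hf0, hf⟩
        have h1 : f ^ (q - 1) * f = 1 * f := by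
          rw [← pow_succ, show q - 1 + 1 = q from by omega, hf, one_mul]
        exact mul_right_cancel₀ hf0 h1
      · intro h1
        have hf0 : f ≠ 0 := by
          rintro rfl
          rw [zero_pow (show q - 1 ≠ 0 by omega)] at h1
          exact one_ne_zero h1.symm
        refine ⟨hf0, ?_⟩
        rw [show q = q - 1 + 1 from by omega, pow_succ, h1, one_mul]
    rw [hTeq, Set.ncard_coe_finset]
    show Multiset.card (nthRoots (q - 1) (1 : F)) = q - 1
    exact hζ'.card_nthRoots_one
  have heq : {S : Set F | ∃ a f : F, f ≠ 0 ∧ f ^ q = f ∧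
      S = {x : F | (x - a) ^ (q ^ 2 + q + 1) = f}}
      = Set.range (fun p : F × T => {x : F | (x - p.1) ^ (q ^ 2 + q + 1) = (p.2 : F)}) := by
    ext S
    constructor
    · rintro ⟨a, f, hf0, hf, rfl⟩
      exact ⟨(a, ⟨f, hf0, hf⟩), rfl⟩
    · rintro ⟨⟨a, f, hf0, hf⟩, rfl⟩
      exact ⟨a, f, hf0, hf, rfl⟩
  have hinj : Function.Injective
      (fun p : F × T => {x : F | (x - p.1) ^ (q ^ 2 + q + 1) = (p.2 : F)}) := by
    rintro ⟨a, f, hf0, hf⟩ ⟨a', f', hf0', hf'⟩ h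
    obtain ⟨h1, h2⟩ := part2 a f a' f' hf0 hf hf0' hf' h
    simp [Prod.ext_iff, Subtype.ext_iff, h1, h2]
  rw [heq, ← Nat.card_coe_set_eq, Nat.card_range_of_injective hinj,
    Nat.card_prod, Nat.card_eq_fintype_card, hF, Nat.card_coe_set_eq, hTcard]
end

section
/- Let S be a 2-spread of PG(5,q). The number of planes of PG(5,q) that meet every one of some q²+q+1 elements of S in exactly one point (and are disjoint from all other elements of S) is exactly q³(q³+1)(q³−1). -/
/-!
Every point of `PG(5,q)` lies on exactly one element of the spread, and a plane not in the spread
meets each element in a point, a line or not at all. A plane meets at most one element in a line,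
since two lines of a plane intersect while spread elements are disjoint. So the planes meeting
some element in a line are counted by choosing the element (`q³+1` ways), a line in it
(`q²+q+1`) and a plane through that line other than the element (`q³+q²+q`). The remaining planes
outside the spread meet every element in at most a point, and since their `q²+q+1` points are
distributed one per element they meet exactly `q²+q+1` elements. The answer is the total number of
planes minus these two classes. All subspace counts reduce to the number of points of a projective
space, to duality (for hyperplanes and for subspaces through a fixed one) and to double counting
incident pairs of subspaces of consecutive dimensions.
-/

/-- A 2-spread of `PG(5,q)`. -/
def IsSpread (K : Type) [Field K] (S : Set (Submodule K (Fin 6 → K))) : Prop :=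
  (∀ W ∈ S, Module.finrank K ↥W = 3) ∧
  (∀ W ∈ S, ∀ W' ∈ S, W ≠ W' → W ⊓ W' = ⊥) ∧
  (∀ v : Fin 6 → K, v ≠ 0 → ∃ W ∈ S, v ∈ W)

open Module Finset

theorem Set.ncard_mul_eq_ncard_mul {α β : Type*} (r : α → β → Prop) {s : Set α}
    {t : Set β} (hs : s.Finite) (ht : t.Finite) {m n : ℕ}
    (hm : ∀ a ∈ s, {b ∈ t | r a b}.ncard = m)
    (hn : ∀ b ∈ t, {a ∈ s | r a b}.ncard = n) :
    s.ncard * m = t.ncard * n := by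
  classical
  lift s to Finset α using hs
  lift t to Finset β using ht
  simp only [Set.ncard_coe_finset]
  refine card_mul_eq_card_mul r (fun a ha => ?_) (fun b hb => ?_)
  · rw [← hm a ha, ← Set.ncard_coe_finset, coe_bipartiteAbove]; rfl
  · rw [← hn b hb, ← Set.ncard_coe_finset, coe_bipartiteBelow]; rfl

instance Submodule.finite_of_finite {R M : Type*} [Semiring R] [Finite R] [AddCommMonoid M]
    [Module R M] [Module.Finite R M] : Finite (Submodule R M) :=
  have := Module.finite_of_finite R (M := M)
  Finite.of_injective _ SetLike.coe_injective

namespace Submodule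

variable {K V : Type*} [Field K] [AddCommGroup V] [Module K V]

local notation "q" => Fintype.card K

theorem ncard_setOf_finrank_eq_one [Fintype K] :
    {L : Submodule K V | finrank K L = 1}.ncard = ∑ i ∈ range (finrank K V), q ^ i := by
  rw [← Nat.card_coe_set_eq, ← Nat.card_eq_fintype_card,
    ← Projectivization.card_of_finrank K V rfl]
  exact Nat.card_congr (Projectivization.equivSubmodule K V).symm

theorem ncard_setOf_le_and_finrank (T : Submodule K V) (p : ℕ → Prop) :
    {W : Submodule K V | W ≤ T ∧ p (finrank K W)}.ncard
      = {W : Submodule K T | p (finrank K W)}.ncard := by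
  rw [← Set.ncard_image_of_injective _ (map_injective_of_injective T.injective_subtype)]
  congr 1
  ext W
  constructor
  · rintro ⟨hWT, hW⟩
    have hW' : map T.subtype (comap T.subtype W) = W := by
      rw [map_comap_subtype, inf_eq_right.mpr hWT]
    refine ⟨comap T.subtype W, ?_, hW'⟩
    rwa [Set.mem_ofPred_eq, ← finrank_map_subtype_eq, hW']
  · rintro ⟨X, hX, rfl⟩
    exact ⟨map_subtype_le T X, by rwa [finrank_map_subtype_eq]⟩

theorem ncard_setOf_le_and_finrank_eq_one [Fintype K] (T : Submodule K V) :
    {L : Submodule K V | L ≤ T ∧ finrank K L = 1}.ncard = ∑ i ∈ range (finrank K T), q ^ i := by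
  rw [ncard_setOf_le_and_finrank T (· = 1), ncard_setOf_finrank_eq_one]

theorem ncard_setOf_dualAnnihilator_mem [FiniteDimensional K V]
    (P : Set (Submodule K (Dual K V))) :
    {W : Submodule K V | W.dualAnnihilator ∈ P}.ncard = P.ncard :=
  Set.ncard_preimage_of_injective_subset_range
    (fun _ _ h => Subspace.dualAnnihilator_inj.mp h)
    (fun X _ => ⟨X.dualCoannihilator, Subspace.dualCoannihilator_dualAnnihilator_eq⟩)

theorem ncard_setOf_finrank_add_one_eq [Fintype K] [FiniteDimensional K V] :
    {H : Submodule K V | finrank K H + 1 = finrank K V}.ncard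
      = ∑ i ∈ range (finrank K V), q ^ i := by
  have h : {H : Submodule K V | finrank K H + 1 = finrank K V}
      = {H | H.dualAnnihilator ∈ {X : Submodule K (Dual K V) | finrank K X = 1}} := by
    ext H
    have := Subspace.finrank_add_finrank_dualAnnihilator_eq H
    simp only [Set.mem_ofPred_eq]
    omega
  rw [h, ncard_setOf_dualAnnihilator_mem, ncard_setOf_finrank_eq_one, Subspace.dual_finrank_eq]

theorem ncard_setOf_ge_and_finrank_eq_add_one [Fintype K] [FiniteDimensional K V]
    (U : Submodule K V) :
    {W : Submodule K V | U ≤ W ∧ finrank K W = finrank K U + 1}.ncard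
      = ∑ i ∈ range (finrank K V - finrank K U), q ^ i := by
  have hU := Subspace.finrank_add_finrank_dualAnnihilator_eq U
  have h : {W : Submodule K V | U ≤ W ∧ finrank K W = finrank K U + 1}
      = {W | W.dualAnnihilator ∈ {X : Submodule K (Dual K V) | X ≤ U.dualAnnihilator ∧
          finrank K X + 1 = finrank K U.dualAnnihilator}} := by
    ext W
    have := Subspace.finrank_add_finrank_dualAnnihilator_eq W
    simp only [Set.mem_ofPred_eq, Subspace.dualAnnihilator_le_dualAnnihilator_iff]
    exact and_congr_right fun _ => by omega
  rw [h, ncard_setOf_dualAnnihilator_mem, ncard_setOf_le_and_finrank _ (· + 1 = _),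
    ncard_setOf_finrank_add_one_eq (V := U.dualAnnihilator)]
  rw [show finrank K V - finrank K U = finrank K U.dualAnnihilator by omega]

theorem ncard_setOf_finrank_eq_mul [Fintype K] [FiniteDimensional K V] (k : ℕ) :
    {U : Submodule K V | finrank K U = k}.ncard * ∑ i ∈ range (finrank K V - k), q ^ i
      = {W : Submodule K V | finrank K W = k + 1}.ncard * ∑ i ∈ range (k + 1), q ^ i := by
  refine Set.ncard_mul_eq_ncard_mul (· ≤ ·) (Set.toFinite _) (Set.toFinite _)
    (fun U hU => ?_) (fun W hW => ?_)
  · rw [← hU.out, ← ncard_setOf_ge_and_finrank_eq_add_one]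
    congr 1; ext W; simp only [Set.mem_ofPred_eq]; tauto
  · have hW : finrank K W = k + 1 := hW
    rw [← hW, ← ncard_setOf_finrank_add_one_eq (V := W),
      ← ncard_setOf_le_and_finrank W (· + 1 = _)]
    congr 1; ext U; simp only [Set.mem_ofPred_eq, hW, Nat.add_right_cancel_iff]; tauto

theorem ncard_setOf_finrank_eq_three_of_finrank_eq_six [Fintype K] [FiniteDimensional K V]
    (hV : finrank K V = 6) :
    {π : Submodule K V | finrank K π = 3}.ncard
      = (q ^ 3 + 1) * (q ^ 2 + 1) * (q ^ 4 + q ^ 3 + q ^ 2 + q + 1) := by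
  have h1 := ncard_setOf_finrank_eq_one (K := K) (V := V)
  have h12 := ncard_setOf_finrank_eq_mul (K := K) (V := V) 1
  have h23 := ncard_setOf_finrank_eq_mul (K := K) (V := V) 2
  simp only [hV, sum_range_succ, sum_range_zero, Nat.reduceSub, Nat.reduceAdd, zero_add,
    pow_zero, pow_one] at h1 h12 h23
  generalize {L : Submodule K V | finrank K L = 1}.ncard = N₁ at h1 h12
  generalize {L : Submodule K V | finrank K L = 2}.ncard = N₂ at h12 h23
  refine Nat.eq_of_mul_eq_mul_right (m := (1 + q + q ^ 2) * (1 + q)) (by positivity) ?_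
  calc _ = N₂ * (1 + q + q ^ 2 + q ^ 3) * (1 + q) := by rw [← mul_assoc, ← h23]
    _ = N₁ * (1 + q + q ^ 2 + q ^ 3 + q ^ 4) * (1 + q + q ^ 2 + q ^ 3) := by
      rw [mul_right_comm, h12]
    _ = _ := by rw [h1]; ring

theorem finrank_inf_lt_of_ne [FiniteDimensional K V] {π σ : Submodule K V}
    (hfin : finrank K π = finrank K σ) (hne : π ≠ σ) : finrank K ↥(π ⊓ σ) < finrank K π :=
  finrank_lt_finrank_of_lt <| lt_of_le_of_ne inf_le_left fun h =>
    hne (eq_of_le_of_finrank_eq (h ▸ inf_le_right) hfin)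

theorem ncard_setOf_finrank_inf_eq [Fintype K] [FiniteDimensional K V] {σ : Submodule K V}
    {d : ℕ} (hσ : finrank K σ = d + 1) :
    {π : Submodule K V | finrank K π = d + 1 ∧ finrank K ↥(π ⊓ σ) = d}.ncard
      = (∑ i ∈ range (d + 1), q ^ i) * (∑ i ∈ range (finrank K V - d), q ^ i - 1) := by
  have h := Set.ncard_mul_eq_ncard_mul (fun ℓ π => π ⊓ σ = ℓ)
    (s := {ℓ : Submodule K V | ℓ ≤ σ ∧ finrank K ℓ + 1 = finrank K σ})
    (t := {π : Submodule K V | finrank K π = d + 1 ∧ finrank K ↥(π ⊓ σ) = d})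
    (m := ∑ i ∈ range (finrank K V - d), q ^ i - 1) (n := 1) (Set.toFinite _)
    (Set.toFinite _) (fun ℓ hℓ => ?_) (fun π hπ => ?_)
  · rwa [mul_one, ncard_setOf_le_and_finrank σ (· + 1 = _), ncard_setOf_finrank_add_one_eq, hσ,
      eq_comm] at h
  · obtain ⟨hℓσ, hℓ⟩ := hℓ
    have hσmem : σ ∈ {π : Submodule K V | ℓ ≤ π ∧ finrank K π = finrank K ℓ + 1} :=
      ⟨hℓσ, hℓ.symm⟩
    have hℓd : finrank K ℓ = d := by omega
    rw [← hℓd, ← ncard_setOf_ge_and_finrank_eq_add_one,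
      ← Set.ncard_sdiff_singleton_of_mem hσmem]
    congr 1
    ext π
    simp only [Set.mem_ofPred_eq, Set.mem_sdiff, Set.mem_singleton_iff]
    constructor
    · rintro ⟨⟨hπ, hπσ⟩, rfl⟩
      refine ⟨⟨inf_le_left, by omega⟩, fun h => ?_⟩
      rw [h, inf_idem] at hℓd
      omega
    · rintro ⟨⟨hℓπ, hπ⟩, hne⟩
      have hlt := finrank_inf_lt_of_ne (by omega) hne
      have hle := finrank_mono (le_inf hℓπ hℓσ)
      have heq := eq_of_le_of_finrank_eq (le_inf hℓπ hℓσ) (by omega)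
      exact ⟨⟨by omega, by omega⟩, heq.symm⟩
  · rw [Set.ncard_eq_one]
    refine ⟨π ⊓ σ, Set.eq_singleton_iff_unique_mem.mpr ⟨⟨⟨inf_le_right, ?_⟩, rfl⟩, ?_⟩⟩
    · rw [hπ.2, hσ]
    · exact fun ℓ hℓ => hℓ.2.symm

end Submodule

def planesMeetingInLine {K V : Type*} [Field K] [AddCommGroup V] [Module K V]
    (S : Set (Submodule K V)) : Set (Submodule K V) :=
  {π | finrank K π = 3 ∧ ∃ σ ∈ S, finrank K ↥(π ⊓ σ) = 2}

namespace IsSpread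

open Submodule

variable {K : Type} [Field K] {S : Set (Submodule K (Fin 6 → K))}

local notation "q" => Fintype.card K

theorem eq_of_le_of_le (hS : IsSpread K S) {σ σ' W : Submodule K (Fin 6 → K)} (hσ : σ ∈ S)
    (hσ' : σ' ∈ S) (hW : W ≠ ⊥) (h : W ≤ σ) (h' : W ≤ σ') : σ = σ' := by
  by_contra hne
  exact hW (le_bot_iff.mp (hS.2.1 σ hσ σ' hσ' hne ▸ le_inf h h'))

theorem ncard_setOf_le_eq_one (hS : IsSpread K S) {L : Submodule K (Fin 6 → K)}
    (hL : finrank K L = 1) : {σ ∈ S | L ≤ σ}.ncard = 1 := by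
  have hL0 : L ≠ ⊥ := fun h => by rw [h, finrank_bot] at hL; omega
  obtain ⟨v, hvL, hv0⟩ := exists_mem_ne_zero_of_ne_bot hL0
  obtain ⟨σ, hσ, hvσ⟩ := hS.2.2 v hv0
  have hLv : K ∙ v = L := eq_of_le_of_finrank_eq
    ((span_singleton_le_iff_mem v L).mpr hvL) (by rw [finrank_span_singleton hv0, hL])
  have hLσ : L ≤ σ := hLv ▸ (span_singleton_le_iff_mem v σ).mpr hvσ
  rw [Set.ncard_eq_one]
  exact ⟨σ, Set.eq_singleton_iff_unique_mem.mpr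
    ⟨⟨hσ, hLσ⟩, fun σ' hσ' => hS.eq_of_le_of_le hσ'.1 hσ hL0 hσ'.2 hLσ⟩⟩

theorem ncard_eq [Fintype K] (hS : IsSpread K S) : S.ncard = q ^ 3 + 1 := by
  have h := Set.ncard_mul_eq_ncard_mul (fun L σ => L ≤ σ)
    (s := {L : Submodule K (Fin 6 → K) | finrank K L = 1}) (Set.toFinite _) (Set.toFinite S)
    (fun L hL => hS.ncard_setOf_le_eq_one hL) (n := ∑ i ∈ range 3, q ^ i) (fun σ hσ => by
      rw [← hS.1 σ hσ, ← ncard_setOf_le_and_finrank_eq_one]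
      simp only [Set.mem_ofPred_eq, and_comm])
  rw [ncard_setOf_finrank_eq_one, finrank_fin_fun] at h
  simp only [sum_range_succ, sum_range_zero, zero_add, pow_zero, pow_one, mul_one] at h
  refine Nat.eq_of_mul_eq_mul_right (m := 1 + q + q ^ 2) (by positivity) ?_
  rw [← h]
  ring

theorem ncard_setOf_finrank_inf_eq_one [Fintype K] (hS : IsSpread K S)
    {π : Submodule K (Fin 6 → K)} (hπ : ∀ σ ∈ S, finrank K ↥(π ⊓ σ) ≤ 1) :
    {σ ∈ S | finrank K ↥(π ⊓ σ) = 1}.ncard = ∑ i ∈ range (finrank K π), q ^ i := by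
  have h := Set.ncard_mul_eq_ncard_mul (fun L σ => L ≤ σ)
    (s := {L : Submodule K (Fin 6 → K) | L ≤ π ∧ finrank K L = 1}) (Set.toFinite _)
    (Set.toFinite {σ ∈ S | finrank K ↥(π ⊓ σ) = 1}) (m := 1) (n := 1)
    (fun L hL => by
      refine (congrArg Set.ncard ?_).trans (hS.ncard_setOf_le_eq_one hL.2)
      ext σ
      refine ⟨fun h => ⟨h.1.1, h.2⟩, fun h => ⟨⟨h.1, ?_⟩, h.2⟩⟩
      exact le_antisymm (hπ σ h.1) (hL.2 ▸ finrank_mono (le_inf hL.1 h.2)))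
    (fun σ hσ => by
      refine (congrArg Set.ncard ?_).trans
        ((ncard_setOf_le_and_finrank_eq_one (π ⊓ σ)).trans ?_)
      · ext L
        simp only [Set.mem_ofPred_eq, le_inf_iff]
        tauto
      rw [hσ.2, sum_range_one, pow_zero])
  rw [ncard_setOf_le_and_finrank_eq_one] at h
  simpa using h.symm

theorem eq_of_finrank_inf_eq_two (hS : IsSpread K S) {π σ σ' : Submodule K (Fin 6 → K)}
    (hπ : finrank K π = 3) (hσ : σ ∈ S) (hσ' : σ' ∈ S) (h : finrank K ↥(π ⊓ σ) = 2)
    (h' : finrank K ↥(π ⊓ σ') = 2) : σ = σ' := by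
  have hsum := finrank_sup_add_finrank_inf_eq (π ⊓ σ) (π ⊓ σ')
  have hsup : finrank K ↥(π ⊓ σ ⊔ π ⊓ σ') ≤ 3 :=
    hπ ▸ finrank_mono (sup_le inf_le_left inf_le_left)
  refine hS.eq_of_le_of_le hσ hσ' (W := π ⊓ σ ⊓ (π ⊓ σ')) (fun hbot => ?_)
    (inf_le_left.trans inf_le_right) (inf_le_right.trans inf_le_right)
  rw [hbot, finrank_bot] at hsum
  omega

theorem ncard_planesMeetingInLine [Fintype K] (hS : IsSpread K S) :
    (planesMeetingInLine S).ncard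
      = (q ^ 3 + 1) * ((q ^ 2 + q + 1) * (q ^ 3 + q ^ 2 + q)) := by
  have h := Set.ncard_mul_eq_ncard_mul
    (fun π σ : Submodule K (Fin 6 → K) => finrank K ↥(π ⊓ σ) = 2)
    (Set.toFinite (planesMeetingInLine S)) (Set.toFinite S) (m := 1)
    (fun π hπ => by
      obtain ⟨hπ3, σ, hσ, h2⟩ := hπ
      exact Set.ncard_eq_one.mpr ⟨σ, Set.eq_singleton_iff_unique_mem.mpr
        ⟨⟨hσ, h2⟩, fun σ' hσ' => hS.eq_of_finrank_inf_eq_two hπ3 hσ'.1 hσ hσ'.2 h2⟩⟩)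
    (fun σ hσ => by
      refine (congrArg Set.ncard ?_).trans (ncard_setOf_finrank_inf_eq (hS.1 σ hσ))
      ext π
      exact ⟨fun h => ⟨h.1.1, h.2⟩, fun h => ⟨⟨h.1, σ, hσ, h.2⟩, h.2⟩⟩)
  rw [mul_one, hS.ncard_eq, finrank_fin_fun] at h
  simp only [h, sum_range_succ, sum_range_zero, Nat.reduceSub, Nat.reduceAdd, zero_add,
    pow_zero, pow_one]
  rw [show 1 + q + q ^ 2 + q ^ 3 - 1 = q ^ 3 + q ^ 2 + q by omega]
  ring

theorem disjoint_planesMeetingInLine (hS : IsSpread K S) :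
    Disjoint S (planesMeetingInLine S) := by
  rw [Set.disjoint_left]
  rintro σ hσ ⟨-, σ', hσ', h2⟩
  obtain rfl | hne := eq_or_ne σ σ'
  · rw [inf_idem, hS.1 σ hσ] at h2
    omega
  · rw [hS.2.1 σ hσ σ' hσ' hne, finrank_bot] at h2
    omega

theorem setOf_meets_in_points_eq_sdiff [Fintype K] (hS : IsSpread K S) :
    {π : Submodule K (Fin 6 → K) | finrank K π = 3 ∧ π ∉ S ∧
        {σ ∈ S | finrank K ↥(π ⊓ σ) = 1}.ncard = q ^ 2 + q + 1 ∧
        ∀ σ ∈ S, π ⊓ σ = ⊥ ∨ finrank K ↥(π ⊓ σ) = 1}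
      = {π : Submodule K (Fin 6 → K) | finrank K π = 3} \ (S ∪ planesMeetingInLine S) := by
  ext π
  constructor
  · rintro ⟨h3, hnS, -, hall⟩
    refine ⟨h3, ?_⟩
    rintro (h | ⟨-, σ, hσ, h2⟩)
    · exact hnS h
    · rcases hall σ hσ with hbot | h1
      · rw [hbot, finrank_bot] at h2
        omega
      · omega
  · rintro ⟨h3, hnot⟩
    have h3 : finrank K π = 3 := h3
    have hle : ∀ σ ∈ S, finrank K ↥(π ⊓ σ) ≤ 1 := by
      intro σ hσ
      have hlt := finrank_inf_lt_of_ne (h3.trans (hS.1 σ hσ).symm)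
        (fun h => hnot (Or.inl (h ▸ hσ)))
      have hne : finrank K ↥(π ⊓ σ) ≠ 2 := fun h2 => hnot (Or.inr ⟨h3, σ, hσ, h2⟩)
      omega
    refine ⟨h3, fun h => hnot (Or.inl h), ?_, fun σ hσ => ?_⟩
    · rw [hS.ncard_setOf_finrank_inf_eq_one hle, h3]
      simp only [sum_range_succ, sum_range_zero]
      ring
    · rcases Nat.le_one_iff_eq_zero_or_eq_one.mp (hle σ hσ) with h0 | h1
      · exact Or.inl (finrank_eq_zero.mp h0)
      · exact Or.inr h1

end IsSpread

theorem stmt8_general (q : ℕ) (K : Type) [Field K] [Fintype K]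
    (hK : Fintype.card K = q) (S : Set (Submodule K (Fin 6 → K)))
    (hS : IsSpread K S) :
    Set.ncard {π : Submodule K (Fin 6 → K) | Module.finrank K ↥π = 3 ∧ π ∉ S ∧
        Set.ncard {σ ∈ S | Module.finrank K ↥(π ⊓ σ) = 1} = q ^ 2 + q + 1 ∧
        ∀ σ ∈ S, π ⊓ σ = ⊥ ∨ Module.finrank K ↥(π ⊓ σ) = 1} =
      q ^ 3 * (q ^ 3 + 1) * (q ^ 3 - 1) := by
  subst hK
  have hplanes : S ∪ planesMeetingInLine S ⊆ {π | finrank K π = 3} :=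
    Set.union_subset hS.1 fun _ h => h.1
  rw [hS.setOf_meets_in_points_eq_sdiff, Set.ncard_sdiff hplanes,
    Set.ncard_union_eq hS.disjoint_planesMeetingInLine,
    Submodule.ncard_setOf_finrank_eq_three_of_finrank_eq_six (finrank_fin_fun K), hS.ncard_eq,
    hS.ncard_planesMeetingInLine]
  have hq3 : 1 ≤ Fintype.card K ^ 3 := Nat.one_le_pow _ _ Fintype.card_pos
  apply Nat.sub_eq_of_eq_add
  zify [hq3]
  ring

/-- for a 2-spread `S` of `PG(5,q)`, the number of planes of
`PG(5,q)` meeting exactly `q²+q+1` elements of `S` in exactly one point each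
(and disjoint from all other elements of `S`) is exactly `q³(q³+1)(q³−1)`. -/
theorem stmt8 (q : ℕ) (hq : IsPrimePow q) (K : Type) [Field K] [Fintype K]
    (hK : Fintype.card K = q) (S : Set (Submodule K (Fin 6 → K)))
    (hS : IsSpread K S) :
    Set.ncard {π : Submodule K (Fin 6 → K) | Module.finrank K ↥π = 3 ∧ π ∉ S ∧
        Set.ncard {σ ∈ S | Module.finrank K ↥(π ⊓ σ) = 1} = q ^ 2 + q + 1 ∧
        ∀ σ ∈ S, π ⊓ σ = ⊥ ∨ Module.finrank K ↥(π ⊓ σ) = 1} =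
      q ^ 3 * (q ^ 3 + 1) * (q ^ 3 - 1) :=
  stmt8_general q K hK S hS
end
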